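/- Let α₁, ..., αₙ be positive real algebraic numbers and c₀, c₁, ..., cₙ algebraic numbers with c₀ ≠ 0. Then c₀·π + Σⱼ cⱼ·log αⱼ is a transcendental number; in particular it is nonzero. -/
import Mathlib

open Complex Set

private lemma alg_int {x : ℂ} (h : IsAlgebraic ℚ x) : x ∈ integralClosure ℚ ℂ :=
  isAlgebraic_iff_isIntegral.mp h

private lemma int_alg {x : ℂ} (h : x ∈ integralClosure ℚ ℂ) : IsAlgebraic ℚ x :=
  isAlgebraic_iff_isIntegral.mpr h

private lemma algI : IsAlgebraic ℚ (Complex.I) := by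
  refine ⟨Polynomial.X ^ 2 + 1, by
    intro h
    have := congrArg (Polynomial.coeff · 0) h
    simp at this, by simp⟩

private lemma alg_real {x : ℝ} (h : IsAlgebraic ℚ x) : IsAlgebraic ℚ (x : ℂ) := by
  obtain ⟨p, hp, hpx⟩ := h
  refine ⟨p, hp, ?_⟩
  have : (Polynomial.aeval (x : ℂ)) p
      = (Complex.ofRealAm.restrictScalars ℚ) ((Polynomial.aeval x) p) :=
    Polynomial.aeval_algHom_apply (Complex.ofRealAm.restrictScalars ℚ) x p
  rw [this, hpx]; simp

theorem stmt_2 (n : ℕ) (α : Fin n → ℝ)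
    (hpos : ∀ j, 0 < α j)
    (halg : ∀ j, IsAlgebraic ℚ (α j))
    (c₀ : ℂ) (c : Fin n → ℂ)
    (hc₀alg : IsAlgebraic ℚ c₀) (hc₀ : c₀ ≠ 0)
    (hcalg : ∀ j, IsAlgebraic ℚ (c j))
    (hBaker : ∀ (m : ℕ) (β l : Fin m → ℂ),
      (∀ k, Complex.exp (l k) = β k) → (∀ k, IsAlgebraic ℚ (β k)) →
      LinearIndependent ℚ l →
      ∀ (a : ℂ) (d : Fin m → ℂ), IsAlgebraic ℚ a → (∀ k, IsAlgebraic ℚ (d k)) →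
        a + ∑ k, d k * l k = 0 → a = 0 ∧ ∀ k, d k = 0) :
    Transcendental ℚ (c₀ * (Real.pi : ℂ) + ∑ j, c j * (Real.log (α j) : ℂ)) := by
  intro hS
  set S : ℂ := c₀ * (Real.pi : ℂ) + ∑ j, c j * (Real.log (α j) : ℂ) with hSdef
  set L : Fin n → ℂ := fun j => (Real.log (α j) : ℂ) with hL
  -- extract a linearly independent subfamily of the logs
  obtain ⟨t, hts, hspan, hli⟩ := exists_linearIndependent ℚ (Set.range L)
  have htfin : t.Finite := (Set.finite_range L).subset hts
  haveI : Fintype t := htfin.fintype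
  set m := Fintype.card t with hm
  let e : Fin m ≃ t := (Fintype.equivFin t).symm
  set l' : Fin m → ℂ := fun k => (e k : ℂ) with hl'
  have hrange : Set.range l' = t := by
    ext x
    constructor
    · rintro ⟨k, rfl⟩; exact (e k).2
    · intro hx; exact ⟨e.symm ⟨x, hx⟩, by simp [hl']⟩
  have hli' : LinearIndependent ℚ l' :=
    hli.comp e e.injective
  -- π * I is not in the span of the real logs
  have hreal : ∀ x ∈ t, (x : ℂ).im = 0 := by
    intro x hx
    obtain ⟨j, rfl⟩ := hts hx
    simp [hL]
  have hiπ : (Real.pi : ℂ) * Complex.I ∉ Submodule.span ℚ (Set.range l') := by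
    rw [hrange]
    intro hmem
    have him : ∀ x ∈ Submodule.span ℚ t, Complex.im x = 0 := by
      intro x hx
      refine Submodule.span_induction (fun y hy => hreal y hy) (by simp) ?_ ?_ hx
      · intro a b _ _ ha hb; simp [ha, hb]
      · intro q a _ ha
        rw [Rat.smul_def]; simp [ha]
    have := him _ hmem
    simp at this
  -- the combined family
  set l : Fin (m + 1) → ℂ := Fin.cons ((Real.pi : ℂ) * Complex.I) l' with hldef
  have hlind : LinearIndependent ℚ l := hli'.fin_cons hiπ
  -- coefficients of each log in the basis
  have hmem : ∀ j, ∃ g : Fin m → ℚ, (∑ k, g k • l' k) = L j := by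
    intro j
    have : L j ∈ Submodule.span ℚ (Set.range l') := by
      rw [hrange, hspan]
      exact Submodule.subset_span ⟨j, rfl⟩
    exact (Submodule.mem_span_range_iff_exists_fun ℚ).mp this
  choose g hg using hmem
  -- the coefficient family
  set d : Fin (m + 1) → ℂ := Fin.cons (-(c₀ * Complex.I)) (fun k => ∑ j, c j * (g j k : ℂ))
    with hd
  -- exponentials
  set β : Fin (m + 1) → ℂ := fun k => Complex.exp (l k) with hβ
  have hexp : ∀ k, Complex.exp (l k) = β k := fun k => rfl
  have hβalg : ∀ k, IsAlgebraic ℚ (β k) := by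
    intro k
    refine Fin.cases ?_ ?_ k
    · have : β 0 = -1 := by
        simp only [hβ, hldef, Fin.cons_zero]
        exact Complex.exp_pi_mul_I
      rw [this]
      exact int_alg (Subalgebra.neg_mem _ (Subalgebra.one_mem _))
    · intro k
      have hmem' : l' k ∈ t := (e k).2
      obtain ⟨j, hj⟩ := hts hmem'
      have : β k.succ = (α j : ℂ) := by
        simp only [hβ, hldef, Fin.cons_succ]
        rw [← hj]
        simp only [hL]
        rw [← Complex.ofReal_exp, Real.exp_log (hpos j)]
      rw [this]
      exact alg_real (halg j)
  have hdalg : ∀ k, IsAlgebraic ℚ (d k) := by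
    intro k
    refine Fin.cases ?_ ?_ k
    · simp only [hd, Fin.cons_zero]
      exact int_alg (Subalgebra.neg_mem _ (Subalgebra.mul_mem _ (alg_int hc₀alg) (alg_int algI)))
    · intro k
      simp only [hd, Fin.cons_succ]
      refine int_alg (Subalgebra.sum_mem _ fun j _ => Subalgebra.mul_mem _ (alg_int (hcalg j)) ?_)
      exact alg_int (by exact_mod_cast isAlgebraic_algebraMap (A := ℂ) (g j k))
  -- the linear relation
  have hrel : (-S) + ∑ k, d k * l k = 0 := by
    have h1 : ∑ k, d k * l k = d 0 * l 0 + ∑ k : Fin m, d k.succ * l k.succ := by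
      rw [Fin.sum_univ_succ]
    have h2 : d 0 * l 0 = c₀ * (Real.pi : ℂ) := by
      simp only [hd, hldef, Fin.cons_zero]
      have : Complex.I * Complex.I = -1 := Complex.I_mul_I
      ring_nf
      rw [Complex.I_sq]
      ring
    have h3 : ∑ k : Fin m, d k.succ * l k.succ = ∑ j, c j * L j := by
      simp only [hd, hldef, Fin.cons_succ]
      calc ∑ k : Fin m, (∑ j, c j * (g j k : ℂ)) * l' k
          = ∑ k : Fin m, ∑ j, c j * ((g j k : ℂ) * l' k) := by
            refine Finset.sum_congr rfl fun k _ => ?_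
            rw [Finset.sum_mul]
            exact Finset.sum_congr rfl fun j _ => by ring
        _ = ∑ j, ∑ k : Fin m, c j * ((g j k : ℂ) * l' k) := Finset.sum_comm
        _ = ∑ j, c j * L j := by
            refine Finset.sum_congr rfl fun j _ => ?_
            rw [← Finset.mul_sum]
            congr 1
            rw [← hg j]
            exact Finset.sum_congr rfl fun k _ => by rw [Rat.smul_def]
    rw [h1, h2, h3]
    simp only [hSdef, hL]
    ring
  have hneg : IsAlgebraic ℚ (-S) := int_alg (Subalgebra.neg_mem _ (alg_int hS))
  obtain ⟨-, hzero⟩ := hBaker (m + 1) β l hexp hβalg hlind (-S) d hneg hdalg hrel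
  have := hzero 0
  simp only [hd, Fin.cons_zero, neg_eq_zero, mul_eq_zero] at this
  rcases this with h | h
  · exact hc₀ h
  · exact Complex.I_ne_zero h
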